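/- In an interchange of order n with a collection F of t flips, if distinct lanes a, b, c are pairwise equivalent under F, then in the flipped graph at least one of a, b, c is joined by a two-edge lane–ramp–lane path to at least (n - 2^{t+1} - 3)/3 other lanes. -/

import Mathlib

/-! If neither `a` nor `b` reached many lanes, more than `2 ^ t` lanes would be reached from
neither, and two of them, `k` and `k'`, would be equivalent. Take a closest pair of lanes
between `{a, b}` and `{k, k'}`: the other two lanes lie outside the interval it spans, so the
ramp of that pair is adjacent in `G` to one lane of each equivalent pair and not to the other.
Flips toggle the adjacencies of the ramp to equivalent lanes alike, so in the flipped graph it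
is still adjacent to a lane of each pair, which gives a two-edge path from `{a, b}` to
`{k, k'}`. -/

/-- An interchange of order `n` in a graph `G`: a linear sequence of `n` lanes, and a
ramp for each pair of lanes; each ramp is adjacent to its two lanes and non-adjacent to
every lane outside the interval between its two lanes (lane–lane and ramp–ramp edges,
and edges from a ramp to lanes strictly between its two lanes, are unconstrained). -/
structure Interchange {V : Type*} (G : SimpleGraph V) (n : ℕ) where
  lane : Fin n → V
  ramp : ∀ i j : Fin n, i < j → V
  lane_inj : Function.Injective lane
  ramp_ne_lane : ∀ i j (h : i < j) (k : Fin n), ramp i j h ≠ lane k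
  ramp_inj : ∀ i j (h : i < j) i' j' (h' : i' < j'),
    ramp i j h = ramp i' j' h' → i = i' ∧ j = j'
  adj_left : ∀ i j (h : i < j), G.Adj (ramp i j h) (lane i)
  adj_right : ∀ i j (h : i < j), G.Adj (ramp i j h) (lane j)
  not_adj : ∀ i j (h : i < j) (k : Fin n), k < i ∨ j < k → ¬ G.Adj (ramp i j h) (lane k)

/-- The graph obtained from `G` by performing a collection `F` of flips: the adjacency
of a pair of distinct vertices is toggled once for each flip containing both. -/
def multiFlip {V : Type*} (G : SimpleGraph V) (F : Finset (Set V)) : SimpleGraph V where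
  Adj u v := u ≠ v ∧ Xor' (G.Adj u v) (Odd {A : Set V | A ∈ F ∧ u ∈ A ∧ v ∈ A}.ncard)
  symm := by
    constructor
    intro u v h
    refine ⟨h.1.symm, ?_⟩
    have hset : {A : Set V | A ∈ F ∧ v ∈ A ∧ u ∈ A} = {A : Set V | A ∈ F ∧ u ∈ A ∧ v ∈ A} := by
      ext A; simp only [Set.mem_setOf_eq]; tauto
    rw [G.adj_comm v u, hset]
    exact h.2
  loopless := ⟨fun v h => h.1 rfl⟩

/-- Two vertices are equivalent under a collection `F` of flips if each flip in `F`
contains both or neither of them. -/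
def EqvUnder {V : Type*} (F : Finset (Set V)) (u v : V) : Prop :=
  ∀ A ∈ F, (u ∈ A ↔ v ∈ A)

theorem exists_mem_mem_forall_mem_uIcc {α : Type*} [LinearOrder α] {P Q : Finset α}
    (hP : P.Nonempty) (hQ : Q.Nonempty) :
    ∃ x ∈ P, ∃ w ∈ Q, ∀ z ∈ P ∪ Q, z ∈ Set.uIcc x w → z = x ∨ z = w := by
  classical
  -- an inner point of `[x, w]` from `P` or `Q` would make a pair with fewer points between
  let between : α × α → Finset α := fun p => {z ∈ P ∪ Q | z ∈ Set.uIcc p.1 p.2}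
  obtain ⟨⟨x, w⟩, hxw, hmin⟩ :=
    (P ×ˢ Q).exists_min_image (fun p => (between p).card) (hP.product hQ)
  rw [Finset.mem_product] at hxw
  have shrink : ∀ u v, Set.uIcc u v ⊆ Set.uIcc x w → ∀ y ∈ P ∪ Q, y ∈ Set.uIcc x w →
      y ∉ Set.uIcc u v → (between (u, v)).card < (between (x, w)).card := by
    intro u v huv y hy hyxw hyuv
    refine Finset.card_lt_card ((Finset.ssubset_iff_of_subset ?_).2 ?_)
    · exact Finset.monotone_filter_right _ fun _ _ h => huv h
    · exact ⟨y, Finset.mem_filter.2 ⟨hy, hyxw⟩, fun h => hyuv (Finset.mem_filter.1 h).2⟩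
  refine ⟨x, hxw.1, w, hxw.2, fun z hz hzxw => ?_⟩
  by_contra! hne
  have hx : x ∈ P ∪ Q := Finset.mem_union_left _ hxw.1
  have hw : w ∈ P ∪ Q := Finset.mem_union_right _ hxw.2
  rcases Finset.mem_union.1 hz with hzP | hzQ
  · refine (shrink z w (Set.uIcc_subset_uIcc_right hzxw) x hx Set.left_mem_uIcc
      fun hx' => ?_).not_ge (hmin (z, w) (Finset.mem_product.2 ⟨hzP, hxw.2⟩))
    exact hne.1 (Set.eq_of_mem_uIcc_of_mem_uIcc hzxw hx')
  · refine (shrink x z (Set.uIcc_subset_uIcc_left hzxw) w hw Set.right_mem_uIcc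
      fun hw' => ?_).not_ge (hmin (x, z) (Finset.mem_product.2 ⟨hxw.1, hzQ⟩))
    exact hne.2 (Set.eq_of_mem_uIcc_of_mem_uIcc' hzxw hw')

theorem two_pow_lt_card_compl_union {α : Type*} [Fintype α] [DecidableEq α] {a b : α}
    {s s' : Finset α} {t : ℕ} (hs : (s.card : ℝ) < (Fintype.card α - 2 ^ (t + 1) - 3) / 3)
    (hs' : (s'.card : ℝ) < (Fintype.card α - 2 ^ (t + 1) - 3) / 3) :
    2 ^ t < ({a, b} ∪ s ∪ s')ᶜ.card := by
  have hU : (({a, b} ∪ s ∪ s').card : ℝ) ≤ 2 + s.card + s'.card := by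
    exact_mod_cast (Finset.card_union_le _ _).trans <| Nat.add_le_add_right
      ((Finset.card_union_le _ _).trans (Nat.add_le_add_right Finset.card_le_two _)) _
  rw [← Nat.cast_lt (α := ℝ), Finset.card_compl, Nat.cast_sub (Finset.card_le_univ _)]
  push_cast [pow_succ] at hs hs' ⊢
  linarith [(Fintype.card α).cast_nonneg (α := ℝ), pow_nonneg (zero_le_two (α := ℝ)) t]

namespace EqvUnder

variable {V : Type*} {F : Finset (Set V)}

theorem symm {u v : V} (h : EqvUnder F u v) : EqvUnder F v u := fun A hA => (h A hA).symm

theorem pairwise_pair {ι : Type*} {f : ι → V} {i j : ι} (h : EqvUnder F (f i) (f j)) :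
    ({i, j} : Set ι).Pairwise fun x y => EqvUnder F (f x) (f y) :=
  Set.pairwise_pair.2 fun _ => ⟨h, h.symm⟩

theorem multiFlip_adj_or {G : SimpleGraph V} {u v v' : V} (h : EqvUnder F v v')
    (hv : G.Adj u v) (hv' : ¬ G.Adj u v') (huv' : u ≠ v') :
    (multiFlip G F).Adj u v ∨ (multiFlip G F).Adj u v' := by
  have hflips :
      {A : Set V | A ∈ F ∧ u ∈ A ∧ v ∈ A} = {A : Set V | A ∈ F ∧ u ∈ A ∧ v' ∈ A} := by
    ext A
    exact and_congr_right fun hA => and_congr_right fun _ => h A hA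
  by_cases hodd : Odd {A : Set V | A ∈ F ∧ u ∈ A ∧ v' ∈ A}.ncard
  · exact Or.inr ⟨huv', Or.inr ⟨hodd, hv'⟩⟩
  · exact Or.inl ⟨G.ne_of_adj hv, Or.inl ⟨hv, hflips ▸ hodd⟩⟩

end EqvUnder

theorem exists_ne_eqvUnder_of_two_pow_card_lt {ι V : Type*} (F : Finset (Set V)) (f : ι → V)
    {s : Finset ι} (hs : 2 ^ F.card < s.card) :
    ∃ i ∈ s, ∃ j ∈ s, i ≠ j ∧ EqvUnder F (f i) (f j) := by
  classical
  obtain ⟨i, hi, j, hj, hij, htrace⟩ := Finset.exists_ne_map_eq_of_card_lt_of_maps_to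
    (t := F.powerset) (f := fun i => {A ∈ F | f i ∈ A}) (by rwa [Finset.card_powerset])
    fun i _ => Finset.mem_powerset.2 (Finset.filter_subset _ _)
  refine ⟨i, hi, j, hj, hij, fun A hA => ?_⟩
  simpa [hA] using congrArg (A ∈ ·) htrace

namespace Interchange

variable {V : Type*} {G : SimpleGraph V} {n : ℕ} (I : Interchange G n)

def RampPath (H : SimpleGraph V) (x k : Fin n) : Prop :=
  ∃ (p q : Fin n) (hpq : p < q),
    H.Adj (I.lane x) (I.ramp p q hpq) ∧ H.Adj (I.ramp p q hpq) (I.lane k)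

variable {I}

theorem RampPath.symm {H : SimpleGraph V} {x k : Fin n} (h : I.RampPath H x k) :
    I.RampPath H k x :=
  let ⟨p, q, hpq, hx, hk⟩ := h
  ⟨p, q, hpq, hk.symm, hx.symm⟩

variable (I) {F : Finset (Set V)}

theorem exists_rampPath_of_lt {x y w w' : Fin n} (hxw : x < w) (hy : y < x ∨ w < y)
    (hw' : w' < x ∨ w < w') (hxy : EqvUnder F (I.lane x) (I.lane y))
    (hww' : EqvUnder F (I.lane w) (I.lane w')) :
    ∃ z ∈ ({x, y} : Finset (Fin n)), ∃ z' ∈ ({w, w'} : Finset (Fin n)),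
      I.RampPath (multiFlip G F) z z' := by
  have hleft := hxy.multiFlip_adj_or (I.adj_left x w hxw) (I.not_adj x w hxw y hy)
    (I.ramp_ne_lane x w hxw y)
  have hright := hww'.multiFlip_adj_or (I.adj_right x w hxw) (I.not_adj x w hxw w' hw')
    (I.ramp_ne_lane x w hxw w')
  rcases hleft with hz | hz <;> rcases hright with hz' | hz' <;>
    exact ⟨_, by simp, _, by simp, x, w, hxw, hz.symm, hz'⟩

theorem exists_rampPath_of_disjoint {P Q : Finset (Fin n)} (hP : 1 < P.card)
    (hQ : 1 < Q.card) (hPQ : Disjoint P Q)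
    (eP : (P : Set (Fin n)).Pairwise fun x y => EqvUnder F (I.lane x) (I.lane y))
    (eQ : (Q : Set (Fin n)).Pairwise fun w w' => EqvUnder F (I.lane w) (I.lane w')) :
    ∃ x ∈ P, ∃ w ∈ Q, I.RampPath (multiFlip G F) x w := by
  obtain ⟨x, hx, w, hw, hclosest⟩ := exists_mem_mem_forall_mem_uIcc
    (Finset.card_pos.1 (zero_lt_one.trans hP)) (Finset.card_pos.1 (zero_lt_one.trans hQ))
  obtain ⟨y, hy, hyx⟩ := P.exists_mem_ne hP x
  obtain ⟨w', hw', hw'w⟩ := Q.exists_mem_ne hQ w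
  rw [Finset.disjoint_iff_ne] at hPQ
  have hy_out : y ∉ Set.uIcc x w := fun h =>
    (hclosest y (Finset.mem_union_left _ hy) h).elim hyx (hPQ y hy w hw)
  have hw'_out : w' ∉ Set.uIcc x w := fun h =>
    (hclosest w' (Finset.mem_union_right _ hw') h).elim (hPQ x hx w' hw').symm hw'w
  have hxyP : {x, y} ⊆ P := Finset.insert_subset hx (Finset.singleton_subset_iff.2 hy)
  have hww'Q : {w, w'} ⊆ Q := Finset.insert_subset hw (Finset.singleton_subset_iff.2 hw')
  rcases (hPQ x hx w hw).lt_or_gt with hxw | hwx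
  · rw [Set.uIcc_of_lt hxw, Set.mem_Icc, not_and_or, not_le, not_le] at hy_out hw'_out
    obtain ⟨z, hz, z', hz', h⟩ := I.exists_rampPath_of_lt hxw hy_out (hw'_out.imp id id)
      (eP hx hy hyx.symm) (eQ hw hw' hw'w.symm)
    exact ⟨z, hxyP hz, z', hww'Q hz', h⟩
  · rw [Set.uIcc_of_gt hwx, Set.mem_Icc, not_and_or, not_le, not_le] at hy_out hw'_out
    obtain ⟨z', hz', z, hz, h⟩ := I.exists_rampPath_of_lt hwx hw'_out hy_out
      (eQ hw hw' hw'w.symm) (eP hx hy hyx.symm)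
    exact ⟨z, hxyP hz, z', hww'Q hz', h.symm⟩

end Interchange

theorem interchange_triple_to_many_general {V : Type*} (G : SimpleGraph V) (n : ℕ)
    (I : Interchange G n) (F : Finset (Set V)) (t : ℕ) (ht : F.card = t)
    (a b c : Fin n) (hab : a ≠ b)
    (e1 : EqvUnder F (I.lane a) (I.lane b)) :
    ∃ x ∈ ({a, b, c} : Finset (Fin n)),
      ((n : ℝ) - 2 ^ (t + 1) - 3) / 3 ≤
        ({k : Fin n | k ≠ x ∧ ∃ (p q : Fin n) (hpq : p < q),
            (multiFlip G F).Adj (I.lane x) (I.ramp p q hpq) ∧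
            (multiFlip G F).Adj (I.ramp p q hpq) (I.lane k)}.ncard : ℝ) := by
  classical
  by_contra! hsmall
  let S : Fin n → Finset (Fin n) := fun x => {k | k ≠ x ∧ I.RampPath (multiFlip G F) x k}
  have hS : ∀ x ∈ ({a, b, c} : Finset (Fin n)),
      ((S x).card : ℝ) < ((n : ℝ) - 2 ^ (t + 1) - 3) / 3 := fun x hx => by
    rw [← Set.ncard_coe_finset, Finset.coe_filter_univ]
    exact hsmall x hx
  let U : Finset (Fin n) := {a, b} ∪ S a ∪ S b
  obtain ⟨k, hk, k', hk', hkk', ek⟩ := exists_ne_eqvUnder_of_two_pow_card_lt F I.lane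
    (s := Uᶜ) (ht ▸ two_pow_lt_card_compl_union (by simpa using hS a (by simp))
      (by simpa using hS b (by simp)))
  have hkU : {k, k'} ⊆ Uᶜ := Finset.insert_subset hk (Finset.singleton_subset_iff.2 hk')
  have hdisj : Disjoint ({a, b} : Finset (Fin n)) {k, k'} :=
    (disjoint_compl_right.mono_left
      (Finset.subset_union_left.trans Finset.subset_union_left)).mono_right hkU
  obtain ⟨x, hx, w, hw, hpath⟩ := I.exists_rampPath_of_disjoint
    (Finset.one_lt_card.2 ⟨a, by simp, b, by simp, hab⟩)
    (Finset.one_lt_card.2 ⟨k, by simp, k', by simp, hkk'⟩) hdisj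
    (by rw [Finset.coe_pair]; exact e1.pairwise_pair)
    (by rw [Finset.coe_pair]; exact ek.pairwise_pair)
  have hwS : w ∈ S x := Finset.mem_filter.2
    ⟨Finset.mem_univ w, (Finset.disjoint_iff_ne.1 hdisj x hx w hw).symm, hpath⟩
  have hSU : S x ⊆ U := by
    rcases Finset.mem_insert.1 hx with rfl | hx
    · exact Finset.subset_union_right.trans Finset.subset_union_left
    · rw [Finset.mem_singleton.1 hx]
      exact Finset.subset_union_right
  exact Finset.mem_compl.1 (hkU hw) (hSU hwS)

/-- In an interchange of order `n` with a collection `F` of `t` flips, if distinct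
lanes `a, b, c` are pairwise equivalent under `F`, then in the flipped graph at least
one of `a, b, c` is joined by a two-edge lane–ramp–lane path to at least
`(n - 2^(t+1) - 3)/3` other lanes. -/
theorem interchange_triple_to_many {V : Type*} (G : SimpleGraph V) (n : ℕ)
    (I : Interchange G n) (F : Finset (Set V)) (t : ℕ) (ht : F.card = t)
    (a b c : Fin n) (hab : a ≠ b) (hac : a ≠ c) (hbc : b ≠ c)
    (e1 : EqvUnder F (I.lane a) (I.lane b)) (e2 : EqvUnder F (I.lane a) (I.lane c))
    (e3 : EqvUnder F (I.lane b) (I.lane c)) :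
    ∃ x ∈ ({a, b, c} : Finset (Fin n)),
      ((n : ℝ) - 2 ^ (t + 1) - 3) / 3 ≤
        ({k : Fin n | k ≠ x ∧ ∃ (p q : Fin n) (hpq : p < q),
            (multiFlip G F).Adj (I.lane x) (I.ramp p q hpq) ∧
            (multiFlip G F).Adj (I.ramp p q hpq) (I.lane k)}.ncard : ℝ) :=
  interchange_triple_to_many_general G n I F t ht a b c hab e1
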